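/- arXiv:1411.3090 — 3 statements merged into one kernel-verified Lean document; each statement's English description precedes it below -/
import Mathlib

section
/- Let P and Q be coprime positive integers, and let r_0 = P, r_1 = Q, q_j = ⌊r_{j-1}/r_j⌋, r_{j+1} = r_{j-1} - q_j·r_j be the Euclidean quotient–remainder sequence, with n the least index such that r_{n+1} = 0. Then the sum of q_k·r_k over the odd indices k with 1 ≤ k ≤ n equals P when n is odd, and equals P - 1 when n is even. -/
/-!
Each division step gives `q (j+1) * r (j+1) + r (j+2) = r j`. Applying it at the odd indices
telescopes: `r 0` is the sum of the odd-indexed terms `q k * r k` up to `m` plus the leftover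
remainder `r (m+1)` or `r m`, according to the parity of `m`. At `m = n` that leftover is
`r (n+1) = 0` or `r n = gcd P Q = 1`.
-/

namespace EuclideanRemainderSequence

variable {r q : ℕ → ℕ}

theorem remainder_add_two_eq_mod
    (hq : ∀ j, 1 ≤ j → q j = r (j - 1) / r j)
    (hrec : ∀ j, 1 ≤ j → r (j + 1) = r (j - 1) - q j * r j) (j : ℕ) :
    r (j + 2) = r j % r (j + 1) := by
  rw [hrec (j + 1) le_add_self, hq (j + 1) le_add_self, Nat.add_sub_cancel,
    Nat.mod_eq_sub_div_mul]

theorem quotient_mul_add_remainder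
    (hq : ∀ j, 1 ≤ j → q j = r (j - 1) / r j)
    (hrec : ∀ j, 1 ≤ j → r (j + 1) = r (j - 1) - q j * r j) (j : ℕ) :
    q (j + 1) * r (j + 1) + r (j + 2) = r j := by
  rw [hq (j + 1) le_add_self, Nat.add_sub_cancel, remainder_add_two_eq_mod hq hrec,
    Nat.div_add_mod']

theorem sum_odd_quotient_mul_remainder_add
    (hstep : ∀ j, q (j + 1) * r (j + 1) + r (j + 2) = r j) (m : ℕ) :
    ∑ k ∈ (Finset.Icc 1 m).filter (fun k => Odd k), q k * r k +
      (if Odd m then r (m + 1) else r m) = r 0 := by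
  induction m with
  | zero => simp
  | succ m ih =>
    rw [← Finset.insert_Icc_right_eq_Icc_add_one (by omega), Finset.filter_insert]
    by_cases hm : Odd m
    · have hm' : ¬Odd (m + 1) := Nat.odd_add_one.not.mpr (not_not.mpr hm)
      simp only [hm, hm', if_true, if_false] at ih ⊢
      exact ih
    · have hm' : Odd (m + 1) := Nat.odd_add_one.mpr hm
      simp only [hm, hm', if_true, if_false] at ih ⊢
      rw [Finset.sum_insert (by simp), ← ih, ← hstep m]
      ring

theorem gcd_consecutive_remainders_eq (hmod : ∀ j, r (j + 2) = r j % r (j + 1)) (j : ℕ) :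
    Nat.gcd (r j) (r (j + 1)) = Nat.gcd (r 0) (r 1) := by
  induction j with
  | zero => rfl
  | succ j ih =>
    show Nat.gcd (r (j + 1)) (r (j + 2)) = _
    rw [hmod, Nat.gcd_comm, ← Nat.gcd_rec, Nat.gcd_comm, ih]

end EuclideanRemainderSequence

open EuclideanRemainderSequence

open Finset in
theorem sum_odd_indices_quotient_mul_remainder_general
    (P Q : ℕ) (hPQ : Nat.Coprime P Q)
    (r q : ℕ → ℕ)
    (hr0 : r 0 = P) (hr1 : r 1 = Q)
    (hq : ∀ j, 1 ≤ j → q j = r (j - 1) / r j)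
    (hrec : ∀ j, 1 ≤ j → r (j + 1) = r (j - 1) - q j * r j)
    (n : ℕ) (hn : r (n + 1) = 0) :
    ∑ k ∈ (Finset.Icc 1 n).filter (fun k => Odd k), q k * r k =
      if Odd n then P else P - 1 := by
  have hrn : r n = 1 := by
    simpa [hn, hr0, hr1, hPQ.gcd_eq_one] using
      gcd_consecutive_remainders_eq (remainder_add_two_eq_mod hq hrec) n
  have htel := sum_odd_quotient_mul_remainder_add (quotient_mul_add_remainder hq hrec) n
  rw [hr0] at htel
  split_ifs at htel ⊢ <;> omega

open Finset in
/-- For coprime positive integers `P`, `Q` and the Euclidean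
quotient–remainder sequence `r 0 = P`, `r 1 = Q`, `q j = r (j-1) / r j`,
`r (j+1) = r (j-1) - q j * r j`, with `n` the least index such that
`r (n+1) = 0`, the sum of `q k * r k` over odd indices `k` with
`1 ≤ k ≤ n` equals `P` when `n` is odd, and `P - 1` when `n` is even. -/
theorem sum_odd_indices_quotient_mul_remainder
    (P Q : ℕ) (hP : 0 < P) (hQ : 0 < Q) (hPQ : Nat.Coprime P Q)
    (r q : ℕ → ℕ)
    (hr0 : r 0 = P) (hr1 : r 1 = Q)
    (hq : ∀ j, 1 ≤ j → q j = r (j - 1) / r j)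
    (hrec : ∀ j, 1 ≤ j → r (j + 1) = r (j - 1) - q j * r j)
    (n : ℕ) (hn : r (n + 1) = 0)
    (hleast : ∀ m, m < n → r (m + 1) ≠ 0) :
    ∑ k ∈ (Finset.Icc 1 n).filter (fun k => Odd k), q k * r k =
      if Odd n then P else P - 1 :=
  sum_odd_indices_quotient_mul_remainder_general P Q hPQ r q hr0 hr1 hq hrec n hn
end

section
/- Let P and Q be coprime positive integers, and let r_0 = P, r_1 = Q, q_j = ⌊r_{j-1}/r_j⌋, r_{j+1} = r_{j-1} - q_j·r_j be the Euclidean quotient–remainder sequence, with n the least index such that r_{n+1} = 0. Then the sum of q_k·r_k over the even indices k with 1 ≤ k ≤ n equals Q - 1 when n is odd, and equals Q when n is even. -/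
/-!
Since `q_k r_k = r_{k-1} - r_{k+1}`, the sum over the even `k ≤ n` telescopes along the
odd-indexed remainders to `r_1 - r_{2⌊n/2⌋+1}`. For even `n` the last term is `r_{n+1} = 0`;
for odd `n` it is `r_n = gcd(P, Q) = 1`, because each Euclidean step preserves
`gcd(r_j, r_{j+1})`.
-/

open Finset

theorem sum_filter_even_Icc_tsub_add (r : ℕ → ℕ) (hr : ∀ k, r (k + 2) ≤ r k) (n : ℕ) :
    ∑ k ∈ (Icc 1 n).filter Even, (r (k - 1) - r (k + 1)) + r (2 * (n / 2) + 1) = r 1 := by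
  induction n with
  | zero => simp
  | succ n ih =>
    rw [sum_filter] at ih ⊢
    rw [sum_Icc_succ_top (by omega)]
    rcases Nat.even_or_odd n with hn | hn
    · have hodd : ¬Even (n + 1) := by simpa [Nat.even_add_one] using hn
      have hdiv : (n + 1) / 2 = n / 2 := by rcases hn with ⟨m, rfl⟩; omega
      rw [if_neg hodd, add_zero, hdiv, ih]
    · have heven : Even (n + 1) := hn.add_one
      have hdiv : 2 * ((n + 1) / 2) + 1 = n + 1 + 1 := by rcases hn with ⟨m, rfl⟩; omega
      have hdiv' : 2 * (n / 2) + 1 = n := by rcases hn with ⟨m, rfl⟩; omega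
      have hle : r (n + 1 + 1) ≤ r n := hr n
      rw [hdiv'] at ih
      rw [if_pos heven, hdiv, Nat.add_sub_cancel]
      omega

section EuclideanRemainders

variable {r q : ℕ → ℕ} (hq : ∀ j, 1 ≤ j → q j = r (j - 1) / r j)
  (hrec : ∀ j, 1 ≤ j → r (j + 1) = r (j - 1) - q j * r j)

include hrec in
theorem remainder_add_two_le (k : ℕ) : r (k + 2) ≤ r k := by
  rw [hrec (k + 1) (by omega)]
  exact Nat.sub_le _ _

include hq hrec in
theorem quotient_mul_remainder_eq_tsub {j : ℕ} (hj : 1 ≤ j) :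
    q j * r j = r (j - 1) - r (j + 1) := by
  have hle : q j * r j ≤ r (j - 1) := hq j hj ▸ Nat.div_mul_le_self _ _
  rw [hrec j hj]
  omega

include hq hrec in
theorem remainder_add_two_eq_mod (j : ℕ) : r (j + 2) = r j % r (j + 1) := by
  rw [hrec (j + 1) (by omega), hq (j + 1) (by omega), Nat.mod_eq_sub_div_mul]
  rfl

include hq hrec in
theorem gcd_remainder_eq_gcd_zero_one (j : ℕ) :
    Nat.gcd (r j) (r (j + 1)) = Nat.gcd (r 0) (r 1) := by
  induction j with
  | zero => rfl
  | succ j ih =>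
    rw [remainder_add_two_eq_mod hq hrec, Nat.gcd_comm, ← Nat.gcd_rec, Nat.gcd_comm, ih]

include hq hrec in
theorem remainder_eq_one_of_succ_eq_zero (hcop : Nat.Coprime (r 0) (r 1)) {n : ℕ}
    (hn : r (n + 1) = 0) : r n = 1 := by
  simpa [hn] using (gcd_remainder_eq_gcd_zero_one hq hrec n).trans hcop

end EuclideanRemainders

open Finset in
theorem sum_even_indices_quotient_mul_remainder_general
    (P Q : ℕ) (hPQ : Nat.Coprime P Q)
    (r q : ℕ → ℕ)
    (hr0 : r 0 = P) (hr1 : r 1 = Q)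
    (hq : ∀ j, 1 ≤ j → q j = r (j - 1) / r j)
    (hrec : ∀ j, 1 ≤ j → r (j + 1) = r (j - 1) - q j * r j)
    (n : ℕ) (hn : r (n + 1) = 0) :
    ∑ k ∈ (Finset.Icc 1 n).filter (fun k => Even k), q k * r k =
      if Odd n then Q - 1 else Q := by
  have hterm : ∀ k ∈ (Icc 1 n).filter Even, q k * r k = r (k - 1) - r (k + 1) :=
    fun k hk => quotient_mul_remainder_eq_tsub hq hrec (mem_Icc.mp (mem_filter.mp hk).1).1
  have htel := sum_filter_even_Icc_tsub_add r (remainder_add_two_le hrec) n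
  have hrn : r n = 1 := remainder_eq_one_of_succ_eq_zero hq hrec (hr0 ▸ hr1 ▸ hPQ) hn
  rw [sum_congr rfl hterm, ← hr1]
  rcases Nat.even_or_odd n with ⟨m, rfl⟩ | ⟨m, rfl⟩
  · rw [show 2 * ((m + m) / 2) + 1 = m + m + 1 by omega, hn, add_zero] at htel
    rw [if_neg (Nat.not_odd_iff_even.mpr ⟨m, rfl⟩), htel]
  · rw [show 2 * ((2 * m + 1) / 2) + 1 = 2 * m + 1 by omega, hrn] at htel
    simp only [odd_two_mul_add_one, if_true]
    omega

open Finset in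
/-- For coprime positive integers `P`, `Q` and the Euclidean
quotient–remainder sequence `r 0 = P`, `r 1 = Q`, `q j = r (j-1) / r j`,
`r (j+1) = r (j-1) - q j * r j`, with `n` the least index such that
`r (n+1) = 0`, the sum of `q k * r k` over even indices `k` with
`1 ≤ k ≤ n` equals `Q - 1` when `n` is odd, and `Q` when `n` is even. -/
theorem sum_even_indices_quotient_mul_remainder
    (P Q : ℕ) (hP : 0 < P) (hQ : 0 < Q) (hPQ : Nat.Coprime P Q)
    (r q : ℕ → ℕ)
    (hr0 : r 0 = P) (hr1 : r 1 = Q)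
    (hq : ∀ j, 1 ≤ j → q j = r (j - 1) / r j)
    (hrec : ∀ j, 1 ≤ j → r (j + 1) = r (j - 1) - q j * r j)
    (n : ℕ) (hn : r (n + 1) = 0)
    (hleast : ∀ m, m < n → r (m + 1) ≠ 0) :
    ∑ k ∈ (Finset.Icc 1 n).filter (fun k => Even k), q k * r k =
      if Odd n then Q - 1 else Q :=
  sum_even_indices_quotient_mul_remainder_general P Q hPQ r q hr0 hr1 hq hrec n hn
end

section
/- Let P and Q be coprime positive integers, and let r_0 = P, r_1 = Q, q_j = ⌊r_{j-1}/r_j⌋, r_{j+1} = r_{j-1} - q_j·r_j be the Euclidean quotient–remainder sequence, with n the least index such that r_{n+1} = 0. Define the dot count D = (Σ over odd k with 1 ≤ k < n of q_k·r_k) + (q_n - 1 if n is odd, else 0) and the box count B = (Σ over even k with 1 ≤ k < n of q_k·r_k) + (q_n - 1 if n is even, else 0). Then D = P - 1 and B = Q - 1; that is, the standard position box-dot diagram of q = P/Q contains exactly P - 1 dots and Q - 1 boxes. -/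
/-!
A division step gives `q k * r k = r (k - 1) - r (k + 1)`, so the sum of `q k * r k` over the
odd (even) indices `k ≤ n` telescopes to `r 0` (`r 1`) minus the last remainder of the matching
parity. The gcd is constant along the sequence, so `r n = gcd P Q = 1` and `r (n + 1) = 0`; the
final group of unit squares contributes `q n - 1 = q n * r n - r n`.
-/

open Finset

theorem eq_quot_mul_add_of_div_sub {r q : ℕ → ℕ}
    (hq : ∀ j, 1 ≤ j → q j = r (j - 1) / r j)
    (hrec : ∀ j, 1 ≤ j → r (j + 1) = r (j - 1) - q j * r j) (k : ℕ) :
    r k = q (k + 1) * r (k + 1) + r (k + 2) := by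
  have hqk : q (k + 1) = r k / r (k + 1) := hq (k + 1) (Nat.le_add_left 1 k)
  have hrk : r (k + 2) = r k - q (k + 1) * r (k + 1) := hrec (k + 1) (Nat.le_add_left 1 k)
  have hle : q (k + 1) * r (k + 1) ≤ r k := hqk ▸ Nat.div_mul_le_self _ _
  omega

theorem gcd_eq_gcd_zero_one_of_eq_quot_mul_add {r q : ℕ → ℕ}
    (h : ∀ k, r k = q (k + 1) * r (k + 1) + r (k + 2)) (k : ℕ) :
    Nat.gcd (r k) (r (k + 1)) = Nat.gcd (r 0) (r 1) := by
  induction k with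
  | zero => rfl
  | succ k ih => rw [← ih, h k, Nat.gcd_mul_right_add_left]; exact Nat.gcd_comm _ _

theorem sum_filter_odd_quot_mul_add {r q : ℕ → ℕ}
    (h : ∀ k, r k = q (k + 1) * r (k + 1) + r (k + 2)) (n : ℕ) :
    ∑ k ∈ (Ico 1 (n + 1)).filter Odd, q k * r k + (if Odd n then r (n + 1) else r n) = r 0 := by
  induction n with
  | zero => simp
  | succ n ih =>
    rw [sum_filter, sum_Ico_succ_top (by omega), ← sum_filter, show n + 1 + 1 = n + 2 from rfl]
    rcases Nat.even_or_odd n with hn | hn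
    · simp only [hn.add_one, if_true, Nat.not_odd_iff_even.mpr hn, if_false] at ih ⊢
      rwa [h n, ← add_assoc] at ih
    · simpa only [hn, if_true, Nat.not_odd_iff_even.mpr hn.add_one, if_false, add_zero] using ih

theorem sum_filter_even_quot_mul_add {r q : ℕ → ℕ}
    (h : ∀ k, r k = q (k + 1) * r (k + 1) + r (k + 2)) (n : ℕ) :
    ∑ k ∈ (Ico 1 (n + 1)).filter Even, q k * r k + (if Even n then r (n + 1) else r n) = r 1 := by
  induction n with
  | zero => simp
  | succ n ih =>
    rw [sum_filter, sum_Ico_succ_top (by omega), ← sum_filter, show n + 1 + 1 = n + 2 from rfl]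
    rcases Nat.even_or_odd n with hn | hn
    · simpa only [hn, if_true, Nat.not_even_iff_odd.mpr hn.add_one, if_false, add_zero] using ih
    · simp only [hn.add_one, if_true, Nat.not_even_iff_odd.mpr hn, if_false] at ih ⊢
      rwa [h n, ← add_assoc] at ih

open Finset in
/-- For coprime positive integers `P`, `Q` and the Euclidean
quotient–remainder sequence `r 0 = P`, `r 1 = Q`, `q j = r (j-1) / r j`,
`r (j+1) = r (j-1) - q j * r j`, with `n` the least index such that
`r (n+1) = 0`, the dot count
`D = (Σ over odd k with 1 ≤ k < n of q k * r k) + (qₙ - 1 if n odd, else 0)`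
and the box count
`B = (Σ over even k with 1 ≤ k < n of q k * r k) + (qₙ - 1 if n even, else 0)`
satisfy `D = P - 1` and `B = Q - 1`: the standard position box-dot diagram of
`q = P/Q` contains exactly `P - 1` dots and `Q - 1` boxes. -/
theorem boxdot_diagram_dot_and_box_count
    (P Q : ℕ) (hP : 0 < P) (hQ : 0 < Q) (hPQ : Nat.Coprime P Q)
    (r q : ℕ → ℕ)
    (hr0 : r 0 = P) (hr1 : r 1 = Q)
    (hq : ∀ j, 1 ≤ j → q j = r (j - 1) / r j)
    (hrec : ∀ j, 1 ≤ j → r (j + 1) = r (j - 1) - q j * r j)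
    (n : ℕ) (hn : r (n + 1) = 0)
    (hleast : ∀ m, m < n → r (m + 1) ≠ 0) :
    (∑ k ∈ (Finset.Ico 1 n).filter (fun k => Odd k), q k * r k) +
        (if Odd n then q n - 1 else 0) = P - 1 ∧
    (∑ k ∈ (Finset.Ico 1 n).filter (fun k => Even k), q k * r k) +
        (if Even n then q n - 1 else 0) = Q - 1 := by
  have hstep := eq_quot_mul_add_of_div_sub hq hrec
  have hrn : r n = 1 := by
    simpa [hn, hr0, hr1, hPQ] using gcd_eq_gcd_zero_one_of_eq_quot_mul_add hstep n
  obtain ⟨m, rfl⟩ : ∃ m, n = m + 1 := by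
    rcases n with _ | m
    · exact absurd (hr1.symm.trans hn) hQ.ne'
    · exact ⟨m, rfl⟩
  -- `q n = r (n - 1)`, which is nonzero by minimality of `n`
  have hqn : 0 < q (m + 1) := by
    have hrm : 0 < r m := by
      rcases m with _ | m
      · exact hr0 ▸ hP
      · exact Nat.pos_of_ne_zero (hleast m (by omega))
    have hlast := hstep m
    rw [hrn, hn] at hlast
    omega
  have hodd := sum_filter_odd_quot_mul_add hstep (m + 1)
  have heven := sum_filter_even_quot_mul_add hstep (m + 1)
  rw [sum_filter, sum_Ico_succ_top (by omega), ← sum_filter] at hodd heven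
  rcases Nat.even_or_odd (m + 1) with hm | hm
  · simp only [hm, Nat.not_odd_iff_even.mpr hm, if_true, if_false, hrn, hn, hr0, hr1] at hodd heven ⊢
    omega
  · simp only [hm, Nat.not_even_iff_odd.mpr hm, if_true, if_false, hrn, hn, hr0, hr1] at hodd heven ⊢
    omega
end
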